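/- Let G_{∥v₀} be a well-initialized prefix-independent game, let ε ≥ 0, and let σ̄ be an ε-SPE in G_{∥v₀}. Then there exists an ε-fixed point λ of the negotiation function such that for every history hv of G_{∥v₀}, the play ⟨σ̄_{∥hv}⟩_v is λ-consistent. -/

import Mathlib

noncomputable section

open Filter

/-- Prepend a finite list to an infinite sequence. -/
def prependList {V : Type} (h : List V) (ρ : ℕ → V) : ℕ → V :=
  fun n => if hn : n < h.length then h.get ⟨n, hn⟩ else ρ (n - h.length)

/-- A (turn-based, multiplayer) game on a graph: a finite directed graph `(V, E)`
in which every vertex has an outgoing edge, a partition of the vertices among the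
players (given by `control`), and an outcome function `payoff : Π → V^ω → ℝ`. -/
structure GameStruct (P V : Type) where
  E : V → V → Prop
  total : ∀ v, ∃ w, E v w
  control : V → P
  payoff : P → (ℕ → V) → ℝ

namespace GameStruct

variable {P V : Type}

/-- A strategy: given the history before the current vertex and the current vertex,
choose a successor along an edge. -/
structure Strategy (G : GameStruct P V) where
  toFun : List V → V → V
  valid : ∀ h v, G.E v (toFun h v)

/-- A complete strategy profile. -/
abbrev Profile (G : GameStruct P V) := P → G.Strategy

def step (G : GameStruct P V) (σ : G.Profile) (p : List V × V) : List V × V :=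
  (p.1 ++ [p.2], (σ (G.control p.2)).toFun p.1 p.2)

/-- The play induced by the profile `σ` from vertex `v`, after the past history `h`. -/
def play (G : GameStruct P V) (σ : G.Profile) (h : List V) (v : V) : ℕ → V :=
  fun n => ((G.step σ)^[n] (h, v)).2

/-- An infinite path in the graph. -/
def IsPlay (G : GameStruct P V) (ρ : ℕ → V) : Prop := ∀ n, G.E (ρ n) (ρ (n + 1))

def IsPlayFrom (G : GameStruct P V) (v₀ : V) (ρ : ℕ → V) : Prop := ρ 0 = v₀ ∧ G.IsPlay ρ

/-- A history: a finite nonempty path. -/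
def IsHist (G : GameStruct P V) (H : List V) : Prop := H ≠ [] ∧ List.Chain' G.E H

/-- `hv` is a history of the initialized game `G_{∥v₀}` (here `h` is the part strictly
before the last vertex `v`; it may be empty, in which case `v = v₀`). -/
def IsHistFrom (G : GameStruct P V) (v₀ : V) (h : List V) (v : V) : Prop :=
  List.Chain' G.E (h ++ [v]) ∧ (h ++ [v]).head? = some v₀

/-- The (finite) history `H` is compatible with the strategy `σ` of player `j`. -/
def CompatList (G : GameStruct P V) (σ : G.Strategy) (j : P) (H : List V) : Prop :=
  ∀ k u w, H[k]? = some u → H[k + 1]? = some w → G.control u = j →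
    w = σ.toFun (H.take k) u

/-- The history `H` is compatible with `σ̄_{-i}`, i.e. with every strategy of the
profile except possibly that of player `i`. -/
def CompatExcept (G : GameStruct P V) (i : P) (σ : G.Profile) (H : List V) : Prop :=
  ∀ j, j ≠ i → G.CompatList (σ j) j H

/-- A play `ρ` is `l`-consistent for the requirement `l : V → ℝ ∪ {±∞}`. -/
def Consistent (G : GameStruct P V) (l : V → EReal) (ρ : ℕ → V) : Prop :=
  ∀ n, l (ρ n) ≤ (G.payoff (G.control (ρ n)) (fun k => ρ (n + k)) : EReal)

variable [DecidableEq P]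

/-- The set of `l`-rational strategy profiles (for the players other than `i`) from `v`.
A profile is identified with a complete profile whose `i`-component is irrelevant. -/
def LamRat (G : GameStruct P V) (l : V → EReal) (i : P) (v : V) : Set G.Profile :=
  { σ | ∃ σi : G.Strategy, ∀ h w, G.IsHistFrom v h w → G.CompatExcept i σ (h ++ [w]) →
      G.Consistent l (G.play (Function.update σ i σi) h w) }

/-- `sup_{σ_i} μ_i(⟨σ̄_{-i}, σ_i⟩_v)`. -/
def valAgainst (G : GameStruct P V) (i : P) (σ : G.Profile) (v : V) : EReal :=
  ⨆ σi : G.Strategy, (G.payoff i (G.play (Function.update σ i σi) [] v) : EReal)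

/-- The negotiation function, with the convention `inf ∅ = +∞`. -/
def nego (G : GameStruct P V) (l : V → EReal) : V → EReal :=
  fun v => ⨅ σ ∈ G.LamRat l (G.control v) v, G.valAgainst (G.control v) σ v

/-- A game with steady negotiation. -/
def SteadyNego (G : GameStruct P V) : Prop :=
  ∀ (i : P) (v : V) (l : V → EReal),
    G.LamRat l i v = ∅ ∨
      ∃ σ ∈ G.LamRat l i v, ∀ τ ∈ G.LamRat l i v, G.valAgainst i σ v ≤ G.valAgainst i τ v

/-- Nash equilibrium in `G_{∥v₀}`. -/
def IsNE (G : GameStruct P V) (v₀ : V) (σ : G.Profile) : Prop :=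
  ∀ (i : P) (σ' : G.Strategy),
    G.payoff i (G.play (Function.update σ i σ') [] v₀) ≤ G.payoff i (G.play σ [] v₀)

/-- `ε`-subgame-perfect equilibrium in `G_{∥v₀}`. -/
def IsEpsSPE (G : GameStruct P V) (v₀ : V) (ε : ℝ) (σ : G.Profile) : Prop :=
  ∀ h v, G.IsHistFrom v₀ h v → ∀ (i : P) (σ' : G.Strategy),
    G.payoff i (prependList h (G.play (Function.update σ i σ') h v)) ≤
      G.payoff i (prependList h (G.play σ h v)) + ε

/-- `l` is an `ε`-fixed point of the negotiation function (`±∞` is within `ε` of itself). -/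
def IsEFix (G : GameStruct P V) (ε : ℝ) (l : V → EReal) : Prop :=
  ∀ v, l v - (ε : EReal) ≤ G.nego l v ∧ G.nego l v ≤ l v + (ε : EReal)

/-- Prefix-independent game. -/
def PrefixIndependent (G : GameStruct P V) : Prop :=
  ∀ (h : List V) (ρ : ℕ → V), G.IsHist h → G.IsPlay ρ → ∀ i,
    G.payoff i (prependList h ρ) = G.payoff i ρ

/-- Well-initialized game: every vertex is reachable from `v₀`. -/
def WellInit (G : GameStruct P V) (v₀ : V) : Prop :=
  ∀ v, Relation.ReflTransGen G.E v₀ v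

/-- `G` is the mean-payoff game given by the weight function `π`. -/
def IsMeanPayoff (G : GameStruct P V) (π : P → V → V → ℚ) : Prop :=
  ∀ i ρ, G.payoff i ρ =
    Filter.liminf
      (fun n : ℕ => (∑ k ∈ Finset.range n, (π i (ρ k) (ρ (k + 1)) : ℝ)) / n)
      Filter.atTop

end GameStruct

/-!
Take for `λ(u)` the least payoff that the owner of `u` receives from `σ̄` over all histories
ending in `u`. Every suffix of a play of `σ̄` after a history is again such a play, so these
plays are `λ`-consistent. For any requirement, a `λ`-rational environment leaves the player a
`λ`-consistent answer from `v`, which already earns `λ(v)`; hence `λ ≤ nego(λ)`.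
Conversely, for each history `hv` the continuation `σ̄_{∥hv}` is itself a `λ`-rational
environment from `v`, and by the `ε`-SPE property and prefix independence no deviation from it
earns more than `μ(⟨σ̄_{∥hv}⟩_v) + ε`; taking the infimum over `hv` gives `nego(λ) ≤ λ + ε`.
-/

@[simp]
lemma prependList_nil {V : Type} (ρ : ℕ → V) : prependList [] ρ = ρ := by
  funext n
  simp [prependList]

namespace GameStruct

variable {P V : Type} {G : GameStruct P V}

section Histories

lemma isHistFrom_nil (v : V) : G.IsHistFrom v [] v :=
  ⟨List.isChain_singleton v, rfl⟩

lemma IsHistFrom.snoc {v₀ v w : V} {h : List V} (hh : G.IsHistFrom v₀ h v) (he : G.E v w) :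
    G.IsHistFrom v₀ (h ++ [v]) w := by
  obtain ⟨hc, hd⟩ := hh
  refine ⟨hc.append (List.isChain_singleton w) (by simp [he]), ?_⟩
  simpa [List.head?_append] using hd

lemma IsHistFrom.append {v₀ v w : V} {h h' : List V} (h₁ : G.IsHistFrom v₀ h v)
    (h₂ : G.IsHistFrom v h' w) : G.IsHistFrom v₀ (h ++ h') w := by
  obtain ⟨c₁, d₁⟩ := h₁
  obtain ⟨c₂, d₂⟩ := h₂
  rcases h' with _ | ⟨u, t⟩
  · obtain rfl : w = v := by simpa using d₂
    exact ⟨by simpa using c₁, by simpa using d₁⟩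
  · obtain rfl : u = v := by simpa using d₂
    refine ⟨show List.IsChain _ _ by simpa using c₁.append_overlap c₂ (by simp), ?_⟩
    simpa [List.head?_append] using d₁

lemma IsHistFrom.isHist {v₀ v : V} {h : List V} (hh : G.IsHistFrom v₀ h v) (hne : h ≠ []) :
    G.IsHist h :=
  ⟨hne, hh.1.prefix (List.prefix_append h [v])⟩

lemma payoff_prependList (hpi : G.PrefixIndependent) {v₀ v : V} {h : List V}
    (hh : G.IsHistFrom v₀ h v) {ρ : ℕ → V} (hρ : G.IsPlay ρ) (j : P) :
    G.payoff j (prependList h ρ) = G.payoff j ρ := by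
  rcases eq_or_ne h [] with rfl | hne
  · rw [prependList_nil]
  · exact hpi h ρ (hh.isHist hne) hρ j

end Histories

section Plays

@[simp]
lemma play_zero (σ : G.Profile) (h : List V) (v : V) : G.play σ h v 0 = v := rfl

lemma play_isPlay (σ : G.Profile) (h : List V) (v : V) : G.IsPlay (G.play σ h v) := by
  intro n
  simp only [play, Function.iterate_succ_apply']
  exact (σ _).valid _ _

lemma play_add (σ : G.Profile) (h : List V) (v : V) (n : ℕ) :
    (fun k => G.play σ h v (n + k)) =
      G.play σ ((G.step σ)^[n] (h, v)).1 (G.play σ h v n) := by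
  funext k
  simp only [play, add_comm n, Function.iterate_add_apply]

lemma IsHistFrom.iterate_step {v₀ v : V} {h : List V} (hh : G.IsHistFrom v₀ h v)
    (σ : G.Profile) (n : ℕ) :
    G.IsHistFrom v₀ ((G.step σ)^[n] (h, v)).1 (G.play σ h v n) := by
  induction n with
  | zero => exact hh
  | succ n ih =>
    simp only [play, Function.iterate_succ_apply']
    exact ih.snoc ((σ _).valid _ _)

lemma consistent_play_of_forall_le {v₀ v : V} {h : List V} {l : V → EReal}
    {σ : G.Profile}
    (hl : ∀ u h, G.IsHistFrom v₀ h u → l u ≤ G.payoff (G.control u) (G.play σ h u))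
    (hh : G.IsHistFrom v₀ h v) : G.Consistent l (G.play σ h v) := by
  intro n
  rw [play_add]
  exact hl _ _ (hh.iterate_step σ n)

end Plays

section Continuations

def Strategy.after (s : G.Strategy) (h₀ : List V) : G.Strategy :=
  ⟨fun h u => s.toFun (h₀ ++ h) u, fun h u => s.valid (h₀ ++ h) u⟩

def Strategy.forgetPrefix (s : G.Strategy) (n : ℕ) : G.Strategy :=
  ⟨fun h u => s.toFun (h.drop n) u, fun h u => s.valid (h.drop n) u⟩

@[simp]
lemma Strategy.forgetPrefix_after (s : G.Strategy) (h₀ : List V) :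
    (s.forgetPrefix h₀.length).after h₀ = s := by
  simp [after, forgetPrefix]

def Profile.after (σ : G.Profile) (h₀ : List V) : G.Profile := fun j => (σ j).after h₀

lemma Profile.update_after [DecidableEq P] (σ : G.Profile) (i : P) (s : G.Strategy)
    (h₀ : List V) :
    Profile.after (Function.update σ i s) h₀ =
      Function.update (σ.after h₀) i (s.after h₀) := by
  funext j
  rcases eq_or_ne j i with rfl | hj <;> simp [Profile.after, *]

lemma iterate_step_append (σ : G.Profile) (h₀ h : List V) (v : V) (n : ℕ) :
    (G.step σ)^[n] (h₀ ++ h, v) =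
      (h₀ ++ ((G.step (σ.after h₀))^[n] (h, v)).1,
        ((G.step (σ.after h₀))^[n] (h, v)).2) := by
  induction n generalizing h v with
  | zero => rfl
  | succ n ih =>
    simp only [Function.iterate_succ_apply]
    rw [← ih]
    simp [step, Profile.after, Strategy.after]

lemma play_append (σ : G.Profile) (h₀ h : List V) (v : V) :
    G.play σ (h₀ ++ h) v = G.play (σ.after h₀) h v := by
  funext n
  simp only [play, iterate_step_append]

lemma play_update_after [DecidableEq P] (σ : G.Profile) (i : P) (s : G.Strategy)
    (h₀ : List V) (v : V) :
    G.play (Function.update (σ.after h₀) i s) [] v =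
      G.play (Function.update σ i (s.forgetPrefix h₀.length)) h₀ v := by
  have := G.play_append (Function.update σ i (s.forgetPrefix h₀.length)) h₀ [] v
  rw [List.append_nil] at this
  rw [this, Profile.update_after, Strategy.forgetPrefix_after]

end Continuations

section Negotiation

variable [DecidableEq P]

lemma payoff_le_valAgainst (i : P) (σ : G.Profile) (v : V) (s : G.Strategy) :
    (G.payoff i (G.play (Function.update σ i s) [] v) : EReal) ≤ G.valAgainst i σ v :=
  le_iSup (fun s : G.Strategy => (G.payoff i (G.play (Function.update σ i s) [] v) : EReal)) s

lemma le_nego (l : V → EReal) (v : V) : l v ≤ G.nego l v := by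
  refine le_iInf₂ fun τ ⟨s, hs⟩ => ?_
  have hcons :
      l v ≤ G.payoff (G.control v) (G.play (Function.update τ (G.control v) s) [] v) := by
    simpa using hs [] v (isHistFrom_nil v) (fun _ _ _ _ _ _ hw => by simp at hw) 0
  exact hcons.trans (payoff_le_valAgainst _ τ v s)

lemma valAgainst_after_le (hpi : G.PrefixIndependent) {v₀ v : V} {ε : ℝ} {σ : G.Profile}
    (hσ : G.IsEpsSPE v₀ ε σ) {h₀ : List V} (hh₀ : G.IsHistFrom v₀ h₀ v) (i : P) :
    G.valAgainst i (σ.after h₀) v ≤ ((G.payoff i (G.play σ h₀ v) + ε : ℝ) : EReal) := by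
  refine iSup_le fun s => ?_
  have hdev := hσ h₀ v hh₀ i (s.forgetPrefix h₀.length)
  rw [payoff_prependList hpi hh₀ (play_isPlay _ _ _),
    payoff_prependList hpi hh₀ (play_isPlay _ _ _)] at hdev
  rw [play_update_after]
  exact_mod_cast hdev

end Negotiation

/-- `⊤` at the vertices that no history of `G_{∥v₀}` reaches. -/
def infContinuationPayoff (G : GameStruct P V) (v₀ : V) (σ : G.Profile) : V → EReal :=
  fun u => ⨅ (h : List V) (_ : G.IsHistFrom v₀ h u),
    (G.payoff (G.control u) (G.play σ h u) : EReal)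

section InfContinuationPayoff

variable {v₀ : V} {σ : G.Profile}

lemma infContinuationPayoff_le {h : List V} {u : V} (hh : G.IsHistFrom v₀ h u) :
    G.infContinuationPayoff v₀ σ u ≤ G.payoff (G.control u) (G.play σ h u) :=
  iInf₂_le h hh

lemma consistent_infContinuationPayoff {h : List V} {v : V} (hh : G.IsHistFrom v₀ h v) :
    G.Consistent (G.infContinuationPayoff v₀ σ) (G.play σ h v) :=
  consistent_play_of_forall_le (fun _ _ => infContinuationPayoff_le) hh

variable [DecidableEq P]

lemma after_mem_lamRat {h₀ : List V} {v : V} (hh₀ : G.IsHistFrom v₀ h₀ v) (i : P) :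
    σ.after h₀ ∈ G.LamRat (G.infContinuationPayoff v₀ σ) i v := by
  refine ⟨σ.after h₀ i, fun h w hh _ => ?_⟩
  rw [Function.update_eq_self, ← play_append]
  exact consistent_infContinuationPayoff (hh₀.append hh)

lemma nego_infContinuationPayoff_le (hpi : G.PrefixIndependent) {ε : ℝ}
    (hσ : G.IsEpsSPE v₀ ε σ) (v : V) :
    G.nego (G.infContinuationPayoff v₀ σ) v ≤ G.infContinuationPayoff v₀ σ v + ε := by
  rw [← EReal.sub_le_iff_le_add (.inl (EReal.coe_ne_bot ε)) (.inl (EReal.coe_ne_top ε))]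
  refine le_iInf₂ fun h₀ hh₀ => EReal.sub_le_of_le_add ?_
  calc G.nego (G.infContinuationPayoff v₀ σ) v
      ≤ G.valAgainst (G.control v) (σ.after h₀) v := iInf₂_le _ (after_mem_lamRat hh₀ _)
    _ ≤ ((G.payoff (G.control v) (G.play σ h₀ v) + ε : ℝ) : EReal) :=
      valAgainst_after_le hpi hσ hh₀ _
    _ = G.payoff (G.control v) (G.play σ h₀ v) + ε := EReal.coe_add _ _

end InfContinuationPayoff

end GameStruct

open GameStruct in
theorem epsSPE_gives_eps_fixed_point_general
    {P V : Type} [DecidableEq P]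
    (G : GameStruct P V) (v₀ : V) (hpi : G.PrefixIndependent)
    (ε : ℝ) (hε : 0 ≤ ε)
    (σ : G.Profile) (hσ : G.IsEpsSPE v₀ ε σ) :
    ∃ l : V → EReal, G.IsEFix ε l ∧
      ∀ h v, G.IsHistFrom v₀ h v → G.Consistent l (G.play σ h v) := by
  refine ⟨G.infContinuationPayoff v₀ σ,
    fun v => ⟨?_, nego_infContinuationPayoff_le hpi hσ v⟩,
    fun _ _ => consistent_infContinuationPayoff⟩
  have hε' : (0 : EReal) ≤ ε := by exact_mod_cast hε
  exact (EReal.sub_le_of_le_add (le_add_of_nonneg_right hε')).trans (le_nego _ v)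

open GameStruct in
/-- In a well-initialized prefix-independent game, for every `ε`-SPE `σ̄`
there is an `ε`-fixed point `λ` of the negotiation function such that for every history
`hv`, the play `⟨σ̄_{∥hv}⟩_v` is `λ`-consistent. -/
theorem epsSPE_gives_eps_fixed_point
    {P V : Type} [Fintype P] [Fintype V] [DecidableEq P]
    (G : GameStruct P V) (v₀ : V) (hwi : G.WellInit v₀) (hpi : G.PrefixIndependent)
    (ε : ℝ) (hε : 0 ≤ ε)
    (σ : G.Profile) (hσ : G.IsEpsSPE v₀ ε σ) :
    ∃ l : V → EReal, G.IsEFix ε l ∧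
      ∀ h v, G.IsHistFrom v₀ h v → G.Consistent l (G.play σ h v) :=
  epsSPE_gives_eps_fixed_point_general G v₀ hpi ε hε σ hσ
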